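/- With ψ : ℚ_p × ℤ_p² → ℤ_p² defined via digit reversal as in Definition (ψ(g,(x,y)) = (x+⌊g⌋+d, y−b+r_n(c−d p^n)) where b = f_n(y), c = a + r_n(b), d ∈ {0,1} chosen so c − d p^n ∈ {0,…,p^n−1}), and φ_n : ℤ_p² → ℤ_p defined by φ_n(x,y) = p^n x + r_n(f_n(y)), one has φ_n(ψ(g,(x,y))) = p^n g + φ_n(x,y) for all x,y ∈ ℤ_p and all g ∈ p^{-n} ℤ_p. -/

import Mathlib

open scoped Classical

/-- Reversal of the base-`p` digit string of length `n`. -/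
def rev (p n a : ℕ) : ℕ := ∑ i ∈ Finset.range n, (a / p ^ (n - 1 - i) % p) * p ^ i

/-- The result of applying the digit-reversal map, given the decomposition
`g = z + a / p^n` of the acting group element. -/
noncomputable def psiOut (p : ℕ) [Fact p.Prime] (n : ℕ) (z : ℤ_[p]) (a : ℕ)
    (m : ℤ_[p] × ℤ_[p]) : ℤ_[p] × ℤ_[p] :=
  let b := m.2.appr n
  let c := a + rev p n b
  if c < p ^ n then (m.1 + z, m.2 - (b : ℤ_[p]) + (rev p n c : ℤ_[p]))
  else (m.1 + z + 1, m.2 - (b : ℤ_[p]) + (rev p n (c - p ^ n) : ℤ_[p]))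

/-- The digit-reversal action of `(ℚ_p, +)` on `ℤ_p²`. -/
noncomputable def psi (p : ℕ) [Fact p.Prime] (g : ℚ_[p]) (m : ℤ_[p] × ℤ_[p]) :
    ℤ_[p] × ℤ_[p] :=
  if h : ∃ n : ℕ, ∃ z : ℤ_[p], ∃ a : ℕ, a < p ^ n ∧
      g = (z : ℚ_[p]) + (a : ℚ_[p]) / (p : ℚ_[p]) ^ n then
    psiOut p h.choose h.choose_spec.choose h.choose_spec.choose_spec.choose m
  else m

/-- `φ_n(x,y) = p^n x + r_n(f_n(y))`. -/
noncomputable def phi (p : ℕ) [Fact p.Prime] (n : ℕ) (m : ℤ_[p] × ℤ_[p]) : ℤ_[p] :=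
  (p : ℤ_[p]) ^ n * m.1 + (rev p n (m.2.appr n) : ℤ_[p])

lemma geom_aux (p n : ℕ) (hp : 1 < p) :
    ∑ i ∈ Finset.range n, (p - 1) * p ^ i = p ^ n - 1 := by
  induction n with
  | zero => simp
  | succ n ih =>
    rw [Finset.sum_range_succ, ih]
    have h1 : 1 ≤ p ^ n := Nat.one_le_pow _ _ (by omega)
    have h2 : p ^ n ≤ p ^ (n+1) := Nat.pow_le_pow_right (by omega) (by omega)
    have h3 : (p - 1) * p ^ n = p * p ^ n - 1 * p ^ n := Nat.sub_mul _ _ _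
    rw [pow_succ] at h2 ⊢
    have h4 : p ^ n * p = p * p ^ n := mul_comm _ _
    omega

lemma rev_lt (p n a : ℕ) (hp : 1 < p) : rev p n a < p ^ n := by
  have : rev p n a ≤ p ^ n - 1 := by
    rw [← geom_aux p n hp]
    apply Finset.sum_le_sum
    intro i _
    exact Nat.mul_le_mul_right _ (Nat.le_sub_one_of_lt (Nat.mod_lt _ (by omega)))
  have h1 : 1 ≤ p ^ n := Nat.one_le_pow _ _ (by omega)
  omega

lemma digit_sum (p : ℕ) (hp : 1 < p) (n : ℕ) (d : ℕ → ℕ) (hd : ∀ i, i < n → d i < p)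
    {j : ℕ} (hj : j < n) :
    (∑ i ∈ Finset.range n, d i * p ^ i) / p ^ j % p = d j := by
  obtain ⟨k, rfl⟩ : ∃ k, n = j + (k + 1) := ⟨n - j - 1, by omega⟩
  rw [Finset.sum_range_add, Finset.sum_range_succ']
  have hL : ∑ i ∈ Finset.range j, d i * p ^ i < p ^ j := by
    have hle : ∑ i ∈ Finset.range j, d i * p ^ i ≤ ∑ i ∈ Finset.range j, (p-1) * p ^ i :=
      Finset.sum_le_sum fun i hi => Nat.mul_le_mul_right _
        (Nat.le_sub_one_of_lt (hd i (by simp only [Finset.mem_range] at hi; omega)))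
    have h1 : 1 ≤ p ^ j := Nat.one_le_pow _ _ (by omega)
    rw [geom_aux p j hp] at hle
    omega
  have hre : ∀ i : ℕ, d (j + (i+1)) * p ^ (j + (i+1)) = p ^ j * (p * (d (j + (i+1)) * p ^ i)) := by
    intro i; rw [pow_add, pow_succ]; ring
  simp only [hre, add_zero, Nat.add_zero]
  rw [← Finset.mul_sum, ← Finset.mul_sum]
  have : p ^ j * (p * ∑ i ∈ Finset.range k, d (j + (i+1)) * p ^ i) + d j * p ^ j
      = (d j + p * ∑ i ∈ Finset.range k, d (j + (i+1)) * p ^ i) * p ^ j := by ring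
  rw [this, Nat.add_mul_div_right _ _ (show 0 < p ^ j by positivity),
    Nat.div_eq_of_lt hL, zero_add, Nat.add_mul_mod_self_left,
    Nat.mod_eq_of_lt (hd j hj)]

lemma sum_digits (p : ℕ) (hp : 1 < p) : ∀ n a, a < p ^ n →
    ∑ i ∈ Finset.range n, (a / p ^ i % p) * p ^ i = a := by
  intro n
  induction n with
  | zero => intro a ha; simp only [pow_zero, Nat.lt_one_iff] at ha; simp [ha]
  | succ n ih =>
    intro a ha
    rw [Finset.sum_range_succ']
    have hre : ∀ i : ℕ, (a / p ^ (i+1) % p) * p ^ (i+1)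
        = p * ((a / p / p ^ i % p) * p ^ i) := by
      intro i
      rw [pow_succ, Nat.div_div_eq_div_mul, mul_comm (p ^ i) p, ← pow_succ']
      ring
    simp only [hre, pow_zero, Nat.div_one, mul_one]
    rw [← Finset.mul_sum, ih (a / p) (Nat.div_lt_of_lt_mul (by rwa [← pow_succ']))]
    exact Nat.div_add_mod a p

lemma rev_rev (p n a : ℕ) (hp : 1 < p) (ha : a < p ^ n) : rev p n (rev p n a) = a := by
  rcases Nat.eq_zero_or_pos n with h0 | h0
  · subst h0; simp only [pow_zero, Nat.lt_one_iff] at ha; simp [rev, ha]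
  conv_lhs => rw [rev]
  have key : ∀ j, j < n → (rev p n a) / p ^ (n - 1 - j) % p = a / p ^ j % p := by
    intro j hj
    rw [rev, digit_sum p hp n _ (fun i _ => Nat.mod_lt _ (by omega)) (show n-1-j < n by omega)]
    have he : n - 1 - (n - 1 - j) = j := by omega
    rw [he]
  calc ∑ i ∈ Finset.range n, (rev p n a / p ^ (n - 1 - i) % p) * p ^ i
      = ∑ i ∈ Finset.range n, (a / p ^ i % p) * p ^ i :=
        Finset.sum_congr rfl fun i hi => by rw [key i (Finset.mem_range.mp hi)]
    _ = a := sum_digits p hp n a ha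

lemma nat_eq_of_padic_dvd (p : ℕ) [Fact p.Prime] (n u v : ℕ) (hu : u < p ^ n) (hv : v < p ^ n)
    (h : (p : ℤ_[p]) ^ n ∣ ((u : ℤ_[p]) - v)) : u = v := by
  have hc : ((u : ℤ_[p]) - v) = (((u : ℤ) - v : ℤ) : ℤ_[p]) := by push_cast; ring
  rw [hc, PadicInt.pow_p_dvd_int_iff] at h
  have habs : |(u : ℤ) - v| < (p : ℤ) ^ n := by
    rw [abs_lt]
    constructor <;> [nlinarith [(show ((v:ℤ)) < (p:ℤ)^n by exact_mod_cast hv), (show (0:ℤ) ≤ u by positivity)];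
      nlinarith [(show ((u:ℤ)) < (p:ℤ)^n by exact_mod_cast hu), (show (0:ℤ) ≤ v by positivity)]]
  have := Int.eq_zero_of_abs_lt_dvd h habs
  omega

lemma appr_unique (p : ℕ) [Fact p.Prime] (n : ℕ) (x : ℤ_[p]) (k : ℕ) (hk : k < p ^ n)
    (h : (p : ℤ_[p]) ^ n ∣ x - k) : x.appr n = k := by
  have h2 : (p : ℤ_[p]) ^ n ∣ x - x.appr n :=
    Ideal.mem_span_singleton.mp (PadicInt.appr_spec n x)
  have h3 : (p : ℤ_[p]) ^ n ∣ ((x.appr n : ℤ_[p]) - k) := by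
    have := dvd_sub h h2
    have he : (x - k) - (x - x.appr n) = (x.appr n : ℤ_[p]) - k := by ring
    rwa [he] at this
  exact nat_eq_of_padic_dvd p n _ k (PadicInt.appr_lt x n) hk h3

/-- `φ_n(ψ(g,(x,y))) = p^n g + φ_n(x,y)` for `g ∈ p^{-n} ℤ_p`. -/
theorem phi_psiOut (p : ℕ) [Fact p.Prime] (g : ℚ_[p]) (n : ℕ) (z : ℤ_[p]) (a : ℕ)
    (ha : a < p ^ n) (hg : g = (z : ℚ_[p]) + (a : ℚ_[p]) / (p : ℚ_[p]) ^ n)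
    (m : ℤ_[p] × ℤ_[p]) :
    (phi p n (psiOut p n z a m) : ℚ_[p]) = (p : ℚ_[p]) ^ n * g + (phi p n m : ℚ_[p]) := by
  have hp : 1 < p := (Fact.out : p.Prime).one_lt
  have hpq : ((p : ℚ_[p])) ^ n ≠ 0 :=
    pow_ne_zero _ (Nat.cast_ne_zero.mpr (by omega))
  have hb : m.2.appr n < p ^ n := PadicInt.appr_lt _ _
  have hdvd : (p : ℤ_[p]) ^ n ∣ m.2 - (m.2.appr n : ℤ_[p]) :=
    Ideal.mem_span_singleton.mp (PadicInt.appr_spec n m.2)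
  have hrb : rev p n (m.2.appr n) < p ^ n := rev_lt p n _ hp
  by_cases h : a + rev p n (m.2.appr n) < p ^ n
  · simp only [psiOut, phi, if_pos h]
    have h1 : (m.2 - (m.2.appr n : ℤ_[p])
        + (rev p n (a + rev p n (m.2.appr n)) : ℤ_[p])).appr n
        = rev p n (a + rev p n (m.2.appr n)) := by
      apply appr_unique p n _ _ (rev_lt p n _ hp)
      have he : m.2 - (m.2.appr n : ℤ_[p])
          + (rev p n (a + rev p n (m.2.appr n)) : ℤ_[p])
          - (rev p n (a + rev p n (m.2.appr n)) : ℤ_[p])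
          = m.2 - (m.2.appr n : ℤ_[p]) := by ring
      rwa [he]
    rw [h1, rev_rev p n _ hp h, hg]
    push_cast
    field_simp
    ring
  · simp only [psiOut, phi, if_neg h]
    have hlt : a + rev p n (m.2.appr n) - p ^ n < p ^ n := by omega
    have h1 : (m.2 - (m.2.appr n : ℤ_[p])
        + (rev p n (a + rev p n (m.2.appr n) - p ^ n) : ℤ_[p])).appr n
        = rev p n (a + rev p n (m.2.appr n) - p ^ n) := by
      apply appr_unique p n _ _ (rev_lt p n _ hp)
      have he : m.2 - (m.2.appr n : ℤ_[p])
          + (rev p n (a + rev p n (m.2.appr n) - p ^ n) : ℤ_[p])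
          - (rev p n (a + rev p n (m.2.appr n) - p ^ n) : ℤ_[p])
          = m.2 - (m.2.appr n : ℤ_[p]) := by ring
      rwa [he]
    rw [h1, rev_rev p n _ hp hlt, hg]
    push_cast [Nat.cast_sub (le_of_not_gt h)]
    field_simp
    ring
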